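/- arXiv:1912.02592 — 2 statements merged into one kernel-verified Lean document; each statement's English description precedes it below -/
import Mathlib

section
/- Case (iii) of the correctness lemma for Π_Mul^m (a corrupt evaluator forces reconstruction of a wrong m_z): let m_x, m_y, λ_x, λ_y, λ_z, δ_x, δ_y, δ_z, Δ ∈ R = ZMod (2^ℓ), with γ = λ_x·λ_y and χ = δ_x·λ_y + δ_y·λ_x + δ_z − γ both computed honestly, and m_z = m_x·m_y − m_x·λ_y − m_y·λ_x + λ_z + γ the correct masked output. Suppose the honest evaluator reconstructs m_z + Δ. Then P₀'s verification value m*_z = − (m_x + δ_x)·λ_y − (m_y + δ_y)·λ_x + λ_z + 2·γ + χ equals the evaluator's check value (m_z + Δ) − m_x·m_y + δ_z if and only if Δ = 0. -/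
/-! With honest `γ` and `χ`, `P₀`'s value `m*_z` is identically the evaluator's check value
computed from the correct `m_z`; an additive error `Δ` in the reconstructed `m_z` therefore
shifts the check value by exactly `Δ`, and the comparison succeeds iff `Δ = 0`. -/

theorem mulMal_verification_eq_check {R : Type*} [CommRing R] (mx my lx ly lz dx dy dz : R) :
    -((mx + dx) * ly) - (my + dy) * lx + lz + 2 * (lx * ly) + (dx * ly + dy * lx + dz - lx * ly) =
      (mx * my - mx * ly - my * lx + lz + lx * ly) - mx * my + dz := by
  ring

theorem mul_mal_online_check_general (ℓ : ℕ)
    (mx my lx ly lz dx dy dz Δ γ χ mz mzs : ZMod (2 ^ ℓ))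
    (hγ : γ = lx * ly)
    (hχ : χ = dx * ly + dy * lx + dz - γ)
    (hmz : mz = mx * my - mx * ly - my * lx + lz + γ)
    (hmzs : mzs = -((mx + dx) * ly) - (my + dy) * lx + lz + 2 * γ + χ) :
    mzs = (mz + Δ) - mx * my + dz ↔ Δ = 0 := by
  subst hγ hχ hmz hmzs
  rw [mulMal_verification_eq_check, add_sub_right_comm _ Δ, add_right_comm _ Δ,
    left_eq_add]

/-- Case (iii) of the correctness lemma for `Π_Mul^m` (corrupt evaluator forces
reconstruction of `m_z + Δ`): with honest `γ = λ_x·λ_y` and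
`χ = δ_x·λ_y + δ_y·λ_x + δ_z − γ`, `P₀`'s verification value
`m*_z = −(m_x+δ_x)·λ_y − (m_y+δ_y)·λ_x + λ_z + 2γ + χ` equals the check value
`(m_z + Δ) − m_x·m_y + δ_z` iff `Δ = 0`. -/
theorem mul_mal_online_check (ℓ : ℕ) (hℓ : 1 ≤ ℓ)
    (mx my lx ly lz dx dy dz Δ γ χ mz mzs : ZMod (2 ^ ℓ))
    (hγ : γ = lx * ly)
    (hχ : χ = dx * ly + dy * lx + dz - γ)
    (hmz : mz = mx * my - mx * ly - my * lx + lz + γ)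
    (hmzs : mzs = -((mx + dx) * ly) - (my + dy) * lx + lz + 2 * γ + χ) :
    mzs = (mz + Δ) - mx * my + dz ↔ Δ = 0 :=
  mul_mal_online_check_general ℓ mx my lx ly lz dx dy dz Δ γ χ mz mzs hγ hχ hmz hmzs
end

section
/- MSB of a product equals the XOR of the MSBs (the identity underlying the bit-extraction protocol Π_BitExt): let ℓ ≥ 1 and let r, a be nonzero integers such that each of r, a, and r·a lies in the interval [−2^(ℓ−1), 2^(ℓ−1)). For an integer n, write msb(n) for the Boolean predicate 2^(ℓ−1) ≤ ((n : ZMod (2^ℓ))).val. Then msb(r·a) = (msb(r) ≠ msb(a)), i.e. the most significant bit of r·a in two's-complement representation is the XOR of the most significant bits of r and a; equivalently msb(a) = msb(r) XOR msb(r·a), so the parties recover MSB(a) by XORing the sign bit p = MSB(r) with the sign bit q = MSB(r·a). -/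
/-- `msb n` is the Boolean predicate "the most significant bit of the
two's-complement representative of `n` in `ZMod (2^ℓ)` equals `1`". -/
def msb (ℓ : ℕ) (n : ℤ) : Prop :=
  2 ^ (ℓ - 1) ≤ ((n : ZMod (2 ^ ℓ))).val

/- The representative of `n` in `[0, 2^ℓ)` is `n` itself when `n ≥ 0` and `n + 2^ℓ` when
`n < 0`; the first lies below `2^(ℓ-1)`, the second at or above it. -/
theorem msb_iff_neg {ℓ : ℕ} (hℓ : 1 ≤ ℓ) {n : ℤ}
    (hlb : -(2 ^ (ℓ - 1)) ≤ n) (hub : n < 2 ^ (ℓ - 1)) :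
    msb ℓ n ↔ n < 0 := by
  obtain ⟨k, rfl⟩ : ∃ k, ℓ = k + 1 := ⟨ℓ - 1, by omega⟩
  rw [Nat.add_sub_cancel] at hlb hub
  have hval : ((n : ZMod (2 ^ (k + 1))).val : ℤ) = n % 2 ^ (k + 1) := by
    exact_mod_cast ZMod.val_intCast n
  have hpow : (2 : ℤ) ^ (k + 1) = 2 * 2 ^ k := pow_succ' 2 k
  rw [msb, Nat.add_sub_cancel, ← Nat.cast_le (α := ℤ), hval, Nat.cast_pow, Nat.cast_ofNat]
  rcases lt_or_ge n 0 with hneg | hnonneg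
  · rw [Int.emod_eq_add_self_emod, Int.emod_eq_of_lt (by omega) (by omega)]
    omega
  · rw [Int.emod_eq_of_lt hnonneg (by omega)]
    omega

theorem mul_neg_iff_xor {R : Type*} [Ring R] [LinearOrder R] [IsStrictOrderedRing R]
    {r a : R} (hr : r ≠ 0) (ha : a ≠ 0) :
    r * a < 0 ↔ Xor (r < 0) (a < 0) := by
  rw [mul_neg_iff, Xor, ← hr.symm.le_iff_lt, ← ha.symm.le_iff_lt, ← not_lt, ← not_lt]
  tauto

/-- MSB of a product is the XOR of the MSBs: for nonzero integers `r, a`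
with `r`, `a` and `r·a` all in `[−2^(ℓ−1), 2^(ℓ−1))`, we have
`msb(r·a) = msb(r) ⊕ msb(a)`, equivalently `msb(a) = msb(r) ⊕ msb(r·a)`. -/
theorem msb_mul_xor (ℓ : ℕ) (hℓ : 1 ≤ ℓ) (r a : ℤ)
    (hr : r ≠ 0) (ha : a ≠ 0)
    (hrlb : -(2 ^ (ℓ - 1)) ≤ r) (hrub : r < 2 ^ (ℓ - 1))
    (halb : -(2 ^ (ℓ - 1)) ≤ a) (haub : a < 2 ^ (ℓ - 1))
    (hralb : -(2 ^ (ℓ - 1)) ≤ r * a) (hraub : r * a < 2 ^ (ℓ - 1)) :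
    (msb ℓ (r * a) ↔ Xor' (msb ℓ r) (msb ℓ a)) ∧
      (msb ℓ a ↔ Xor' (msb ℓ r) (msb ℓ (r * a))) := by
  rw [msb_iff_neg hℓ hrlb hrub, msb_iff_neg hℓ halb haub, msb_iff_neg hℓ hralb hraub]
  have hsign : r * a < 0 ↔ Xor (r < 0) (a < 0) := mul_neg_iff_xor hr ha
  refine ⟨hsign, ?_⟩
  rw [hsign, Xor']
  unfold Xor
  tauto
end
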